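/- arXiv:0804.1054 — 3 statements merged into one kernel-verified Lean document; each statement's English description precedes it below -/
import Mathlib

section
/- Let D be a triangulated category with small coproducts, D' a full triangulated subcategory containing a set Q of generators of D, and (X', Y', Z') a TTF triple on D'. If the class of objects of X' is recollement-defining in D, i.e. the class Y of objects of D right orthogonal to all shifts of objects of X' fits into a TTF triple (⊥Y, Y, Y⊥) on D, then this TTF triple on D restricts to (X', Y', Z'), meaning ⊥Y ∩ D' = X', Y ∩ D' = Y', and Y⊥ ∩ D' = Z'. -/
open CategoryTheory Limits Pretriangulated

universe v u

variable {C : Type u} [Category.{v} C] [Preadditive C] [Limits.HasZeroObject C]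
  [HasShift C ℤ] [∀ n : ℤ, (shiftFunctor C n).Additive] [Pretriangulated C]

/-- A t-structure on the full triangulated subcategory `D'` of `C`, given by a pair of
classes of objects `(U, V)` of `D'`.  Taking `D' = Set.univ` gives the notion of a
t-structure on `C` itself. -/
structure IsTStructureOn (D' U V : Set C) : Prop where
  subU : U ⊆ D'
  subV : V ⊆ D'
  isoU : ∀ ⦃X Y : C⦄, (X ≅ Y) → X ∈ U → Y ∈ D' → Y ∈ U
  isoV : ∀ ⦃X Y : C⦄, (X ≅ Y) → X ∈ V → Y ∈ D' → Y ∈ V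
  shiftU : ∀ X ∈ U, X⟦(1 : ℤ)⟧ ∈ U
  shiftV : ∀ X ∈ V, X⟦(-1 : ℤ)⟧ ∈ V
  hom_zero : ∀ ⦃X Y : C⦄, X ∈ U → Y ∈ V → ∀ f : X ⟶ Y, f = 0
  exists_triangle : ∀ M ∈ D', ∃ (X Y : C) (_ : X ∈ U) (_ : Y ∈ V)
    (f : X ⟶ M) (g : M ⟶ Y) (h : Y ⟶ X⟦(1 : ℤ)⟧), Triangle.mk f g h ∈ (distTriang C)

/-- A strictly full triangulated subcategory, given as a class of objects. -/
structure IsTriangulatedSub (D' : Set C) : Prop where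
  iso_mem : ∀ ⦃X Y : C⦄, (X ≅ Y) → X ∈ D' → Y ∈ D'
  zero_mem : ∃ Z ∈ D', IsZero Z
  shift_mem : ∀ X ∈ D', ∀ n : ℤ, X⟦n⟧ ∈ D'
  ext_mem : ∀ T ∈ (distTriang C), T.obj₁ ∈ D' → T.obj₃ ∈ D' → T.obj₂ ∈ D'

/-- The class of objects right orthogonal to all shifts of objects of `P`. -/
def rightOrthShifts (P : Set C) : Set C :=
  {M | ∀ X ∈ P, ∀ n : ℤ, ∀ f : X⟦n⟧ ⟶ M, f = 0}

/-- The class of objects left orthogonal to all objects of `S`. -/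
def leftOrth (S : Set C) : Set C := {M | ∀ Y ∈ S, ∀ f : M ⟶ Y, f = 0}

/-- The class of objects right orthogonal to all objects of `S`. -/
def rightOrth (S : Set C) : Set C := {M | ∀ Y ∈ S, ∀ f : Y ⟶ M, f = 0}

/-- The set `Q` generates `C`: an object vanishing against all shifts of objects of `Q`
is zero. -/
def GeneratesCat (Q : Set C) : Prop :=
  ∀ M : C, (∀ X ∈ Q, ∀ n : ℤ, ∀ f : X⟦n⟧ ⟶ M, f = 0) → IsZero M

omit [HasShift C ℤ] [HasZeroObject C] [∀ n : ℤ, (shiftFunctor C n).Additive]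
  [Pretriangulated C] in
lemma leftOrth_anti {S T : Set C} (h : S ⊆ T) : leftOrth T ⊆ leftOrth S :=
  fun _ hM Y hY => hM Y (h hY)

omit [HasShift C ℤ] [HasZeroObject C] [∀ n : ℤ, (shiftFunctor C n).Additive]
  [Pretriangulated C] in
lemma rightOrth_anti {S T : Set C} (h : S ⊆ T) : rightOrth T ⊆ rightOrth S :=
  fun _ hM Y hY => hM Y (h hY)

omit [HasZeroObject C] [∀ n : ℤ, (shiftFunctor C n).Additive] [Pretriangulated C] in
lemma rightOrthShifts_subset_rightOrth (P : Set C) : rightOrthShifts P ⊆ rightOrth P :=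
  fun _ hM X hX f => (cancel_epi ((shiftFunctorZero C ℤ).hom.app X)).1 <| by
    rw [comp_zero]; exact hM X hX 0 _

omit [HasZeroObject C] [∀ n : ℤ, (shiftFunctor C n).Additive] [Pretriangulated C] in
lemma hom_shift_eq_zero_of_forall_eq_zero {X M : C} {n : ℤ}
    (h : ∀ g : X ⟶ M⟦-n⟧, g = 0) (f : X⟦n⟧ ⟶ M) : f = 0 :=
  ((shiftEquiv C n).toAdjunction.homEquiv X M).injective ((h _).trans (h _).symm)

lemma mem_leftOrth_of_distTriang {S : Set C} (T : Triangle C) (hT : T ∈ distTriang C)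
    (h₁ : T.obj₁ ∈ leftOrth S) (h₃ : T.obj₃ ∈ leftOrth S) : T.obj₂ ∈ leftOrth S := by
  intro Y hY f
  obtain ⟨g, rfl⟩ := Triangle.yoneda_exact₂ T hT f (h₁ Y hY _)
  rw [h₃ Y hY g, comp_zero]

lemma mem_rightOrth_of_distTriang {S : Set C} (T : Triangle C) (hT : T ∈ distTriang C)
    (h₁ : T.obj₁ ∈ rightOrth S) (h₃ : T.obj₃ ∈ rightOrth S) : T.obj₂ ∈ rightOrth S := by
  intro Y hY f
  obtain ⟨g, rfl⟩ := Triangle.coyoneda_exact₂ T hT f (h₃ Y hY _)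
  rw [h₁ Y hY g, zero_comp]

lemma isZero_of_mem_rightOrth {D' Q : Set C} (hD' : IsTriangulatedSub D') (hQD' : Q ⊆ D')
    (hQ : GeneratesCat Q) {M : C} (hM : M ∈ rightOrth D') : IsZero M :=
  hQ M fun X hX n => hM _ (hD'.shift_mem X (hQD' hX) n)

namespace IsTStructureOn

variable {D' U V : Set C}

lemma mem_left_of_mem_leftOrth (h : IsTStructureOn D' U V) {M : C} (hM : M ∈ D')
    (hMV : M ∈ leftOrth V) : M ∈ U := by
  obtain ⟨X, Y, hX, hY, f, g, k, hT⟩ := h.exists_triangle M hM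
  obtain ⟨t, ht⟩ := Triangle.yoneda_exact₃ _ hT (𝟙 Y) ((Category.comp_id g).trans (hMV Y hY g))
  have ht0 : t = 0 := h.hom_zero (h.shiftU X hX) hY t
  have hY0 : IsZero Y := by
    rw [IsZero.iff_id_eq_zero, ht, ht0, comp_zero]; rfl
  have : IsIso f := (Triangle.isZero₃_iff_isIso₁ _ hT).1 hY0
  exact h.isoU (asIso f) hX hM

lemma mem_right_of_mem_rightOrth (h : IsTStructureOn D' U V) {M : C} (hM : M ∈ D')
    (hMU : M ∈ rightOrth U) : M ∈ V := by
  obtain ⟨X, Y, hX, hY, f, g, k, hT⟩ := h.exists_triangle M hM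
  obtain ⟨t, ht⟩ :=
    Triangle.coyoneda_exact₂ _ (inv_rot_of_distTriang _ hT) (𝟙 X)
      ((Category.id_comp f).trans (hMU X hX f))
  have ht0 : t = 0 := h.hom_zero hX (h.shiftV Y hY) t
  have hX0 : IsZero X := by
    rw [IsZero.iff_id_eq_zero, ht, ht0, zero_comp]; rfl
  have : IsIso g := (Triangle.isZero₁_iff_isIso₂ _ hT).1 hX0
  exact h.isoV (asIso g).symm hY hM

lemma rightOrth_inter_subset (h : IsTStructureOn D' U V) :
    rightOrth U ∩ rightOrth V ⊆ rightOrth D' := by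
  rintro N ⟨hNU, hNV⟩ M hM
  obtain ⟨X, Y, hX, hY, f, g, k, hT⟩ := h.exists_triangle M hM
  exact mem_leftOrth_of_distTriang _ hT (by rintro _ rfl; exact hNU X hX)
    (by rintro _ rfl; exact hNV Y hY) N rfl

end IsTStructureOn

section TTF

variable {D' X' Y' Z' : Set C}

lemma shift_mem_middle (hD' : IsTriangulatedSub D') (h₁ : IsTStructureOn D' X' Y')
    (h₂ : IsTStructureOn D' Y' Z') (n : ℤ) {M : C} (hM : M ∈ Y') : M⟦n⟧ ∈ Y' := by
  induction n using Int.induction_on with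
  | zero =>
    exact h₁.isoV ((shiftFunctorZero C ℤ).app M).symm hM (hD'.shift_mem M (h₁.subV hM) 0)
  | succ n ih =>
    exact h₁.isoV ((shiftFunctorAdd' C (n : ℤ) 1 (n + 1) rfl).app M).symm
      (h₂.shiftU _ ih) (hD'.shift_mem M (h₁.subV hM) _)
  | pred n ih =>
    exact h₁.isoV ((shiftFunctorAdd' C (-(n : ℤ)) (-1) (-(n : ℤ) - 1) (by ring)).app M).symm
      (h₁.shiftV _ ih) (hD'.shift_mem M (h₁.subV hM) _)

lemma middle_subset_rightOrthShifts (hD' : IsTriangulatedSub D')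
    (h₁ : IsTStructureOn D' X' Y') (h₂ : IsTStructureOn D' Y' Z') :
    Y' ⊆ rightOrthShifts X' :=
  fun _ hM _ hX n => hom_shift_eq_zero_of_forall_eq_zero fun g =>
    h₁.hom_zero hX (shift_mem_middle hD' h₁ h₂ (-n) hM) g

/-- In the triangle `V → M → W → V⟦1⟧` with `V ∈ Y`, `W ∈ Y⊥`, the object `V` receives no
nonzero maps from `X'` or `Y'`, hence none from `D'`, and so vanishes because `D'` contains the
generators. -/
lemma last_subset_rightOrth_of_generates {Q Y : Set C} (hD' : IsTriangulatedSub D')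
    (hQD' : Q ⊆ D') (hQ : GeneratesCat Q) (h₁ : IsTStructureOn D' X' Y')
    (h₂ : IsTStructureOn D' Y' Z')
    (hY : IsTStructureOn Set.univ Y (rightOrth Y)) (hYX' : Y ⊆ rightOrth X') (hY'Y : Y' ⊆ Y) :
    Z' ⊆ rightOrth Y := by
  intro M hM
  obtain ⟨V, W, hV, hW, f, g, k, hT⟩ := hY.exists_triangle M trivial
  have hVY' : V ∈ rightOrth Y' :=
    mem_rightOrth_of_distTriang _ (inv_rot_of_distTriang _ hT)
      (rightOrth_anti hY'Y (hY.shiftV W hW)) (fun _ hN f => h₂.hom_zero hN hM f)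
  have hV0 : IsZero V :=
    isZero_of_mem_rightOrth hD' hQD' hQ (h₁.rightOrth_inter_subset ⟨hYX' hV, hVY'⟩)
  have : IsIso g := (Triangle.isZero₁_iff_isIso₂ _ hT).1 hV0
  exact hY.isoV (asIso g).symm hW trivial

end TTF

theorem stmt2_general (D' : Set C) (hD' : IsTriangulatedSub D')
    (Q : Set C) (hQD' : Q ⊆ D') (hQgen : GeneratesCat Q)
    (X' Y' Z' : Set C)
    (hTTF'₁ : IsTStructureOn D' X' Y') (hTTF'₂ : IsTStructureOn D' Y' Z')
    (hrd₂ : IsTStructureOn Set.univ (rightOrthShifts X') (rightOrth (rightOrthShifts X'))) :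
    leftOrth (rightOrthShifts X') ∩ D' = X' ∧
    rightOrthShifts X' ∩ D' = Y' ∧
    rightOrth (rightOrthShifts X') ∩ D' = Z' := by
  have hY'Y := middle_subset_rightOrthShifts hD' hTTF'₁ hTTF'₂
  have hYX' := rightOrthShifts_subset_rightOrth X'
  refine ⟨subset_antisymm ?_ ?_, subset_antisymm ?_ ?_, subset_antisymm ?_ ?_⟩
  · exact fun M hM => hTTF'₁.mem_left_of_mem_leftOrth hM.2 (leftOrth_anti hY'Y hM.1)
  · exact fun M hM => ⟨fun N hN f => hYX' hN M hM f, hTTF'₁.subU hM⟩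
  · exact fun M hM => hTTF'₁.mem_right_of_mem_rightOrth hM.2 (hYX' hM.1)
  · exact fun M hM => ⟨hY'Y hM, hTTF'₁.subV hM⟩
  · exact fun M hM => hTTF'₂.mem_right_of_mem_rightOrth hM.2 (rightOrth_anti hY'Y hM.1)
  · exact fun M hM => ⟨last_subset_rightOrth_of_generates hD' hQD' hQgen hTTF'₁ hTTF'₂ hrd₂
      hYX' hY'Y hM, hTTF'₂.subV hM⟩

/-- **Lifting TTF triples.**  Let `C` be a triangulated category with small coproducts, `D'` a
full triangulated subcategory containing a set `Q` of generators of `C`, and `(X', Y', Z')` a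
TTF triple on `D'`.  If the objects of `X'` form a recollement-defining class in `C`, i.e. the
class `Y` of objects right orthogonal to all shifts of objects of `X'` fits in a TTF triple
`(⊥Y, Y, Y⊥)` on `C`, then this TTF triple restricts to `(X', Y', Z')`:
`⊥Y ∩ D' = X'`, `Y ∩ D' = Y'` and `Y⊥ ∩ D' = Z'`. -/
theorem stmt2 [HasCoproducts.{v} C] (D' : Set C) (hD' : IsTriangulatedSub D')
    (Q : Set C) (hQD' : Q ⊆ D') (hQgen : GeneratesCat Q)
    (X' Y' Z' : Set C)
    (hTTF'₁ : IsTStructureOn D' X' Y') (hTTF'₂ : IsTStructureOn D' Y' Z')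
    (hrd₁ : IsTStructureOn Set.univ (leftOrth (rightOrthShifts X')) (rightOrthShifts X'))
    (hrd₂ : IsTStructureOn Set.univ (rightOrthShifts X') (rightOrth (rightOrthShifts X'))) :
    leftOrth (rightOrthShifts X') ∩ D' = X' ∧
    rightOrthShifts X' ∩ D' = Y' ∧
    rightOrth (rightOrthShifts X') ∩ D' = Z' :=
  stmt2_general D' hD' Q hQD' hQgen X' Y' Z' hTTF'₁ hTTF'₂ hrd₂
end

section
/- Let D be a triangulated category with small coproducts and Q a set of objects such that Susp(Q) is an aisle in D. Let D' := ⋃_{n∈ℤ} aisle(Q)[n]. Then the inclusion functor D' → D preserves all small coproducts that exist in D'; that is, if a family of objects of D' has a coproduct in D', then that coproduct is also a coproduct in D. -/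
open CategoryTheory Limits Pretriangulated

universe v u

variable {C : Type u} [Category.{v} C] [Preadditive C] [Limits.HasZeroObject C]
  [HasShift C ℤ] [∀ n : ℤ, (shiftFunctor C n).Additive] [Pretriangulated C]

/-- `S` is a strictly full suspended subcategory of `C` containing `Q` and closed under
small coproducts: closed under isomorphisms, the shift `[1]`, extensions and coproducts. -/
def SuspClosed (Q S : Set C) : Prop :=
  Q ⊆ S ∧
  (∀ ⦃X Y : C⦄, (X ≅ Y) → X ∈ S → Y ∈ S) ∧
  (∀ X ∈ S, X⟦(1 : ℤ)⟧ ∈ S) ∧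
  (∀ T ∈ (distTriang C), T.obj₁ ∈ S → T.obj₃ ∈ S → T.obj₂ ∈ S) ∧
  (∀ (ι : Type v) (f : ι → C) (c : Cofan f), IsColimit c → (∀ i, f i ∈ S) → c.pt ∈ S)

/-- `Susp Q`: the smallest full suspended subcategory of `C` containing `Q` and closed
under small coproducts. -/
def Susp (Q : Set C) : Set C := ⋂₀ {S | SuspClosed Q S}

/-- `D' = ⋃_{n ∈ ℤ} aisle(Q)[n]`, the union of all shifts of the aisle generated by `Q`. -/
def rbHull (Q : Set C) : Set C := {M | ∃ n : ℤ, M⟦n⟧ ∈ Susp Q}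

/-!
Write `U = Susp Q` and `D' = rbHull Q`, and let `c` be a coproduct in `D'` of objects `Kᵢ`, with
`c⟦m⟧ ∈ U`. Each `Kᵢ⟦m⟧` already lies in `U`: in its truncation triangle
`X ⟶ Kᵢ⟦m⟧ ⟶ Y ⟶ X⟦1⟧` the object `Y` lies in `D'`, since `D'` is closed under extensions, so
the unshifted truncation map `Kᵢ ⟶ Y⟦-m⟧` is a morphism of `D'`. It extends along the coproduct
injection to `c ⟶ Y⟦-m⟧`, which vanishes because `c⟦m⟧ ∈ U` and `Y` lies in the co-aisle; hence
the truncation map is zero and `Y = 0`. The coproduct of the `Kᵢ` in `C`, shifted by `m`, is then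
a coproduct of objects of `U`, hence lies in `U`; so it lies in `D'`, where it is therefore also
the coproduct.
-/

lemma CategoryTheory.Limits.IsColimit.exists_ι_app_comp_eq_of_discrete {D : Type*} [Category D]
    [HasZeroMorphisms D] {ι : Type*} {K : Discrete ι ⥤ D} {c : Cocone K} (hc : IsColimit c)
    (j : Discrete ι) {Z : D} (f : K.obj j ⟶ Z) : ∃ g : c.pt ⟶ Z, c.ι.app j ≫ g = f := by
  classical
  let t : Cocone K :=
    { pt := Z
      ι := Discrete.natTrans fun j' => if h : j' = j then eqToHom (congrArg K.obj h) ≫ f else 0 }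
  exact ⟨hc.desc t, by simp [t]⟩

lemma suspClosed_susp (Q : Set C) : SuspClosed Q (Susp Q) :=
  ⟨fun _ hx _ hS => hS.1 hx,
    fun _ _ e hX S hS => hS.2.1 e (hX S hS),
    fun X hX S hS => hS.2.2.1 X (hX S hS),
    fun T hT h₁ h₃ S hS => hS.2.2.2.1 T hT (h₁ S hS) (h₃ S hS),
    fun ι f c hc hf S hS => hS.2.2.2.2 ι f c hc fun i => hf i S hS⟩

namespace SuspClosed

variable {Q S : Set C}

lemma shift_shift_mem (hS : SuspClosed Q S) {X : C} {a b c : ℤ} (h : X⟦c⟧ ∈ S)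
    (habc : a + b = c) : X⟦a⟧⟦b⟧ ∈ S :=
  hS.2.1 ((shiftFunctorAdd' C a b c habc).app X) h

lemma shift_mem_of_le (hS : SuspClosed Q S) {X : C} {a b : ℤ} (h : X⟦a⟧ ∈ S) (hab : a ≤ b) :
    X⟦b⟧ ∈ S := by
  obtain ⟨k, rfl⟩ := Int.le.dest hab
  clear hab
  induction k with
  | zero => simpa using h
  | succ k ih =>
    exact hS.2.1 ((shiftFunctorAdd' C (a + k) 1 (a + (k + 1 : ℕ)) (by push_cast; ring)).app X).symm
      (hS.2.2.1 _ ih)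

lemma mem_of_isColimit (hS : SuspClosed Q S) {ι : Type v} {K : Discrete ι ⥤ C} {c : Cocone K}
    (hc : IsColimit c) (hK : ∀ j, K.obj j ∈ S) : c.pt ∈ S :=
  hS.2.2.2.2 ι _ _ ((IsColimit.precomposeHomEquiv Discrete.natIsoFunctor.symm c).symm hc)
    fun i => hK ⟨i⟩

end SuspClosed

section Hull

variable {Q : Set C}

lemma mem_rbHull_of_mem_susp {X : C} (hX : X ∈ Susp Q) : X ∈ rbHull Q :=
  ⟨0, (suspClosed_susp Q).2.1 ((shiftFunctorZero C ℤ).app X).symm hX⟩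

lemma shift_mem_rbHull {X : C} (hX : X ∈ rbHull Q) (a : ℤ) : X⟦a⟧ ∈ rbHull Q := by
  obtain ⟨n, hn⟩ := hX
  exact ⟨n - a, (suspClosed_susp Q).shift_shift_mem hn (by ring)⟩

lemma mem_rbHull_of_distTriang {T : Triangle C} (hT : T ∈ distTriang C)
    (h₁ : T.obj₁ ∈ rbHull Q) (h₃ : T.obj₃ ∈ rbHull Q) : T.obj₂ ∈ rbHull Q := by
  obtain ⟨n₁, hn₁⟩ := h₁
  obtain ⟨n₃, hn₃⟩ := h₃
  have hS := suspClosed_susp Q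
  exact ⟨max n₁ n₃, hS.2.2.2.1 _ (Triangle.shift_distinguished T hT _)
    (hS.shift_mem_of_le hn₁ (le_max_left _ _)) (hS.shift_mem_of_le hn₃ (le_max_right _ _))⟩

end Hull

namespace IsTStructureOn

variable {U V : Set C}

lemma hom_eq_zero_of_shift (hts : IsTStructureOn Set.univ U V) {m : ℤ} {X Y : C}
    (hX : X⟦m⟧ ∈ U) (hY : Y⟦m⟧ ∈ V) (f : X ⟶ Y) : f = 0 :=
  (shiftFunctor C m).map_injective (by rw [Functor.map_zero]; exact hts.hom_zero hX hY _)

lemma mem_of_distTriang_of_mor₂_eq_zero (hts : IsTStructureOn Set.univ U V) {X N Y : C}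
    {f : X ⟶ N} {g : N ⟶ Y} {h : Y ⟶ X⟦(1 : ℤ)⟧} (hT : Triangle.mk f g h ∈ distTriang C)
    (hX : X ∈ U) (hY : Y ∈ V) (hg : g = 0) : N ∈ U := by
  obtain ⟨r, hr⟩ := Triangle.yoneda_exact₃ _ hT (𝟙 Y) (by subst hg; exact zero_comp)
  have hYzero : IsZero Y := by
    rw [IsZero.iff_id_eq_zero, hr, hts.hom_zero (hts.shiftU X hX) hY r]
    exact comp_zero
  have : IsIso f := (Triangle.isZero₃_iff_isIso₁ _ hT).1 hYzero
  exact hts.isoU (asIso f) hX (Set.mem_univ _)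

variable {Q : Set C}

lemma shift_mem_susp_of_forall_hom_eq_zero (hts : IsTStructureOn Set.univ (Susp Q) V)
    {M : C} (hM : M ∈ rbHull Q) (m : ℤ)
    (hzero : ∀ Z ∈ rbHull Q, Z⟦m⟧ ∈ V → ∀ g : M ⟶ Z, g = 0) : M⟦m⟧ ∈ Susp Q := by
  obtain ⟨X, Y, hX, hY, f, g, h, hT⟩ := hts.exists_triangle (M⟦m⟧) (Set.mem_univ _)
  refine hts.mem_of_distTriang_of_mor₂_eq_zero hT hX hY ?_
  have hYhull : Y ∈ rbHull Q := mem_rbHull_of_distTriang (rot_of_distTriang _ hT)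
    (shift_mem_rbHull hM m) (mem_rbHull_of_mem_susp (hts.shiftU X hX))
  let e : Y⟦-m⟧⟦m⟧ ≅ Y := shiftNegShift Y m
  have hpre := hzero (Y⟦-m⟧) (shift_mem_rbHull hYhull _) (hts.isoV e.symm hY (Set.mem_univ _))
    ((shiftFunctor C m).preimage (g ≫ e.inv))
  rw [← cancel_mono e.inv, zero_comp, ← (shiftFunctor C m).map_preimage (g ≫ e.inv), hpre,
    Functor.map_zero]

lemma shift_mem_susp_of_isColimit (hts : IsTStructureOn Set.univ (Susp Q) V) {ι : Type*}
    {K : Discrete ι ⥤ ObjectProperty.FullSubcategory (· ∈ rbHull Q)} {c : Cocone K}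
    (hc : IsColimit c) {m : ℤ} (hm : c.pt.obj⟦m⟧ ∈ Susp Q) (j : Discrete ι) :
    (K.obj j).obj⟦m⟧ ∈ Susp Q := by
  refine hts.shift_mem_susp_of_forall_hom_eq_zero (K.obj j).property m fun Z hZ hZV g => ?_
  obtain ⟨g', hg'⟩ := hc.exists_ι_app_comp_eq_of_discrete j
    (ObjectProperty.homMk g : K.obj j ⟶ ⟨Z, hZ⟩)
  have hg'zero : g'.hom = 0 := hts.hom_eq_zero_of_shift hm hZV g'.hom
  simpa [hg'zero] using congrArg (fun φ => φ.hom) hg'.symm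

end IsTStructureOn

/-- **The inclusion of the right bounded hull preserves coproducts.**
Let `C` be a triangulated category with small coproducts and `Q` a set of objects such that
`Susp Q` is an aisle in `C`.  Let `D' := ⋃_{n∈ℤ} aisle(Q)[n]`.  Then the inclusion functor
`D' ⥤ C` preserves all small coproducts which exist in `D'`. -/
theorem stmt5 [HasCoproducts.{v} C] (Q : Set C)
    (haisle : ∃ V, IsTStructureOn Set.univ (Susp Q) V) :
    ∀ ι : Type v, Nonempty
      (PreservesColimitsOfShape (Discrete ι) (ObjectProperty.ι (· ∈ rbHull Q))) := by
  obtain ⟨V, hts⟩ := haisle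
  refine fun ι => ⟨⟨fun {K} => ⟨fun {c} hc => ?_⟩⟩⟩
  obtain ⟨m, hm⟩ := c.pt.property
  have hcolim : colimit (K ⋙ ObjectProperty.ι _) ∈ rbHull Q :=
    ⟨m, (suspClosed_susp Q).mem_of_isColimit
      (isColimitOfPreserves (shiftFunctor C m) (colimit.isColimit _))
      (hts.shift_mem_susp_of_isColimit hc hm)⟩
  have := createsColimitFullSubcategoryInclusion K hcolim
  have : HasColimit K := ⟨⟨⟨c, hc⟩⟩⟩
  exact ⟨isColimitOfPreserves (ObjectProperty.ι (· ∈ rbHull Q)) hc⟩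
end

section
/- Let D be a triangulated category with small coproducts and Q a set of objects such that Susp(Q) is an aisle in D whose coaisle Susp(Q)^⊥ is closed under small coproducts. Let D' := ⋃_{n∈ℤ} aisle(Q)[n]. Then an object P of D' is compact in D' if and only if it is compact in D. -/
open CategoryTheory Limits Pretriangulated

universe v u

variable {C : Type u} [Category.{v} C] [Preadditive C] [Limits.HasZeroObject C]
  [HasShift C ℤ] [∀ n : ℤ, (shiftFunctor C n).Additive] [Pretriangulated C]

/-- The canonical map `⨁ᵢ Hom(P, fᵢ) ⟶ Hom(P, pt)` induced by a cofan. -/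
noncomputable def sumToHom {ι : Type v} (f : ι → C) (c : Cofan f) (P : C) :
    DirectSum ι (fun i => P ⟶ f i) →+ (P ⟶ c.pt) :=
  letI := Classical.decEq ι
  DirectSum.toAddMonoid (fun i => AddMonoidHom.mk' (fun g => g ≫ c.inj i)
    (fun g₁ g₂ => Preadditive.add_comp _ _ _ _ _ _))

/-- `c` is a coproduct of the family `f` *inside* the full subcategory determined by `S`. -/
def IsCoprodIn (S : Set C) {ι : Type v} (f : ι → C) (c : Cofan f) : Prop :=
  c.pt ∈ S ∧ (∀ i, f i ∈ S) ∧ ∀ c' : Cofan f, c'.pt ∈ S →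
    ∃! m : c.pt ⟶ c'.pt, ∀ i, c.inj i ≫ m = c'.inj i

/-- `P` is compact in the full subcategory determined by `S`: `Hom(P, ?)` preserves
(i.e. turns into direct sums of abelian groups) all small coproducts that exist there. -/
def IsCompactIn (S : Set C) (P : C) : Prop :=
  ∀ (ι : Type v) (f : ι → C) (c : Cofan f), IsCoprodIn S f c →
    Function.Bijective (sumToHom f c P)

/-!
A coproduct in `D'` of objects `fᵢ` is already a coproduct in `C`: every `fᵢ` is a retract of
it, so all `fᵢ[N]` lie in the aisle `Susp Q` for a single `N` (aisles are closed under
retracts), hence so does `(∐ fᵢ)[N]`, and the coproduct in `D'` is then isomorphic to `∐ fᵢ`.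
This gives compact in `C` ⇒ compact in `D'`.

Conversely let `P[n] ∈ Susp Q` be compact in `D'` and `u : P ⟶ ∐ fᵢ`. Truncate each `fᵢ` as
`Aᵢ → fᵢ → Bᵢ →` with `Aᵢ[n]` in the aisle and `Bᵢ[n]` in the coaisle. As the coaisle is closed
under coproducts, `u` vanishes in `∐ Bᵢ`, so it lifts to `∐ Aᵢ ∈ D'`, where compactness of `P`
in `D'` factors the lift through finitely many `Aᵢ`.
-/

lemma pt_mem_susp_of_isColimit {Q : Set C} {ι : Type v} {f : ι → C} {c : Cofan f}
    (hc : IsColimit c) (hf : ∀ i, f i ∈ Susp Q) : c.pt ∈ Susp Q :=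
  fun _ hS => hS.2.2.2.2 ι f c hc (fun i => hf i _ hS)

omit [Preadditive C] [HasZeroObject C] [∀ n : ℤ, (shiftFunctor C n).Additive]
  [Pretriangulated C] in
lemma shift_sigma_mem {S : Set C}
    (hS : ∀ (ι : Type v) (f : ι → C) (c : Cofan f), IsColimit c → (∀ i, f i ∈ S) → c.pt ∈ S)
    {ι : Type v} (f : ι → C) [HasCoproduct f] (n : ℤ) (hf : ∀ i, (f i)⟦n⟧ ∈ S) :
    (∐ f)⟦n⟧ ∈ S :=
  hS ι _ _ (isColimitCofanMkObjOfIsColimit (shiftFunctor C n) f _ (coproductIsCoproduct f)) hf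

namespace IsTStructureOn

variable {U V : Set C} (hUV : IsTStructureOn Set.univ U V)
include hUV

lemma mem_of_hom_zero {M : C} (hM : ∀ Y ∈ V, ∀ g : M ⟶ Y, g = 0) : M ∈ U := by
  obtain ⟨A, B, hA, hB, a, b, g, hT⟩ := hUV.exists_triangle M trivial
  have hB0 : IsZero B := by
    obtain ⟨k, hk⟩ := Triangle.yoneda_exact₂ _ (rot_of_distTriang _ hT) (𝟙 B)
      ((Category.comp_id b).trans (hM B hB b))
    have hk0 : k = 0 := hUV.hom_zero (hUV.shiftU A hA) hB k
    rw [IsZero.iff_id_eq_zero, hk, hk0]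
    exact comp_zero
  have : IsIso a := (Triangle.isZero₃_iff_isIso₁ _ hT).1 hB0
  exact hUV.isoU (asIso a) hA trivial

lemma mem_of_retract {X Y : C} (h : Retract X Y) (hY : Y ∈ U) : X ∈ U :=
  hUV.mem_of_hom_zero fun Z hZ g => by
    rw [← Category.id_comp g, ← h.retract, Category.assoc, hUV.hom_zero hY hZ (h.r ≫ g),
      comp_zero]

lemma exists_distTriang_shift_mem (X : C) (n : ℤ) :
    ∃ (A B : C) (α : A ⟶ X) (β : X ⟶ B) (γ : B ⟶ A⟦(1 : ℤ)⟧),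
      Triangle.mk α β γ ∈ distTriang C ∧ A⟦n⟧ ∈ U ∧ B⟦n⟧ ∈ V := by
  obtain ⟨A, B, hA, hB, a, b, g, hT⟩ := hUV.exists_triangle (X⟦n⟧) trivial
  set T := (Triangle.shiftFunctor C (-n)).obj (Triangle.mk a b g)
  have hT₁ : T.obj₁⟦n⟧ ∈ U :=
    hUV.isoU ((shiftFunctorCompIsoId C (-n) n (neg_add_cancel n)).app A).symm hA trivial
  have hT₃ : T.obj₃⟦n⟧ ∈ V :=
    hUV.isoV ((shiftFunctorCompIsoId C (-n) n (neg_add_cancel n)).app B).symm hB trivial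
  have hTd : T ∈ distTriang C := Triangle.shift_distinguished _ hT (-n)
  let e : T.obj₂ ≅ X := (shiftFunctorCompIsoId C n (-n) (add_neg_cancel n)).app X
  clear_value T e
  have hiso : Triangle.mk (T.mor₁ ≫ e.hom) (e.inv ≫ T.mor₂) T.mor₃ ≅ T :=
    Triangle.isoMk _ _ (Iso.refl _) e.symm (Iso.refl _)
      (by show (T.mor₁ ≫ e.hom) ≫ e.inv = 𝟙 _ ≫ T.mor₁; simp)
      (by show (e.inv ≫ T.mor₂) ≫ 𝟙 _ = e.inv ≫ T.mor₂; simp)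
      (by show T.mor₃ ≫ (𝟙 _)⟦(1 : ℤ)⟧' = 𝟙 _ ≫ T.mor₃; simp)
  exact ⟨T.obj₁, T.obj₃, T.mor₁ ≫ e.hom, e.inv ≫ T.mor₂, T.mor₃,
    isomorphic_distinguished _ hTd _ hiso, hT₁, hT₃⟩

end IsTStructureOn

section Coproducts

omit [HasZeroObject C] [HasShift C ℤ] [∀ n : ℤ, (shiftFunctor C n).Additive]
  [Pretriangulated C]

variable {S : Set C} {ι : Type v} {f : ι → C} {c : Cofan f}

lemma sumToHom_of [DecidableEq ι] (P : C) (i : ι) (g : P ⟶ f i) :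
    sumToHom f c P (DirectSum.of (fun i => P ⟶ f i) i g) = g ≫ c.inj i := by
  unfold sumToHom
  exact DirectSum.toAddMonoid_of (fun i => AddMonoidHom.mk' (fun g => g ≫ c.inj i)
    (fun g₁ g₂ => Preadditive.add_comp _ _ _ _ _ _)) i g

lemma sumToHom_comp {A : ι → C} {cA : Cofan A} (α : ∀ i, A i ⟶ f i) (φ : cA.pt ⟶ c.pt)
    (hφ : ∀ i, cA.inj i ≫ φ = α i ≫ c.inj i) (P : C) (x : DirectSum ι (fun i => P ⟶ A i)) :
    sumToHom A cA P x ≫ φ =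
      sumToHom f c P (DirectSum.map (fun i => Preadditive.rightComp P (α i)) x) := by
  classical
  induction x using DirectSum.induction_on with
  | zero => simp
  | of i g =>
    rw [DirectSum.map_of, sumToHom_of, sumToHom_of, Category.assoc, hφ, ← Category.assoc]
    rfl
  | add x y hx hy => rw [map_add, Preadditive.add_comp, hx, hy, map_add, map_add]

omit [Preadditive C] in
lemma isCoprodIn_of_isColimit (hc : IsColimit c) (hpt : c.pt ∈ S) (hf : ∀ i, f i ∈ S) :
    IsCoprodIn S f c :=
  ⟨hpt, hf, fun c' _ => ⟨Cofan.IsColimit.desc hc c'.inj, Cofan.IsColimit.fac hc _,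
    fun m hm => Cofan.IsColimit.hom_ext hc _ _ fun i => by rw [hm, Cofan.IsColimit.fac]⟩⟩

namespace IsCoprodIn

lemma exists_proj [DecidableEq ι] (hc : IsCoprodIn S f c) (j : ι) :
    ∃ p : c.pt ⟶ f j, ∀ i, c.inj i ≫ p = if h : i = j then eqToHom (congrArg f h) else 0 :=
  let ⟨p, hp, _⟩ := hc.2.2
    (Cofan.mk (f j) fun i => if h : i = j then eqToHom (congrArg f h) else 0) (hc.2.1 j)
  ⟨p, hp⟩

lemma nonempty_retract (hc : IsCoprodIn S f c) (j : ι) : Nonempty (Retract (f j) c.pt) := by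
  classical
  obtain ⟨p, hp⟩ := hc.exists_proj j
  exact ⟨⟨c.inj j, p, by simp [hp]⟩⟩

lemma sumToHom_injective (hc : IsCoprodIn S f c) (P : C) :
    Function.Injective (sumToHom f c P) := by
  classical
  rw [injective_iff_map_eq_zero]
  intro x hx
  ext j
  obtain ⟨p, hp⟩ := hc.exists_proj j
  have hcomp : ∀ y, sumToHom f c P y ≫ p = y j := by
    intro y
    induction y using DirectSum.induction_on with
    | zero => simp
    | of i g =>
      rw [sumToHom_of, Category.assoc, hp, DirectSum.of_apply]
      split_ifs with h
      · subst h; simp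
      · simp
    | add y z hy hz => rw [map_add, Preadditive.add_comp, hy, hz, DirectSum.add_apply]
  simpa [hx] using (hcomp x).symm

omit [Preadditive C] in
lemma nonempty_isColimit [HasCoproduct f] (hc : IsCoprodIn S f c) (hS : ∐ f ∈ S) :
    Nonempty (IsColimit c) := by
  obtain ⟨v, hv, -⟩ := hc.2.2 (Cofan.mk (∐ f) (Sigma.ι f)) hS
  have hv' : ∀ i, c.inj i ≫ v = Sigma.ι f i := hv
  have hvu : v ≫ Sigma.desc c.inj = 𝟙 c.pt :=
    (hc.2.2 c hc.1).unique (fun i => by simp [reassoc_of% hv' i]) (fun i => Category.comp_id _)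
  refine ⟨Cofan.IsColimit.mk c (fun t => v ≫ Sigma.desc t.inj)
    (fun t i => by simp [reassoc_of% hv' i]) (fun t m hm => ?_)⟩
  calc m = (v ≫ Sigma.desc c.inj) ≫ m := by rw [hvu, Category.id_comp]
    _ = v ≫ Sigma.desc t.inj := by
      rw [Category.assoc]
      congr 1
      exact Sigma.hom_ext _ _ fun i => by simp [hm]

end IsCoprodIn

end Coproducts

lemma sigma_mem_rbHull {Q : Set C} {ι : Type v} (f : ι → C) [HasCoproduct f] (n : ℤ)
    (hf : ∀ i, (f i)⟦n⟧ ∈ Susp Q) : ∐ f ∈ rbHull Q :=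
  ⟨n, shift_sigma_mem (fun _ _ _ => pt_mem_susp_of_isColimit) f n hf⟩

lemma exists_lift_sigma_of_comp_eq_zero {ι : Type v} {A f B : ι → C} [HasCoproduct A]
    [HasCoproduct B] {c : Cofan f} (hc : IsColimit c) (α : ∀ i, A i ⟶ f i)
    (β : ∀ i, f i ⟶ B i) (γ : ∀ i, B i ⟶ (A i)⟦(1 : ℤ)⟧)
    (hT : ∀ i, Triangle.mk (α i) (β i) (γ i) ∈ distTriang C) {P : C} (u : P ⟶ c.pt)
    (hu : u ≫ Cofan.IsColimit.desc hc (fun i => β i ≫ Sigma.ι B i) = 0) :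
    ∃ v : P ⟶ ∐ A, v ≫ Sigma.desc (fun i => α i ≫ c.inj i) = u := by
  obtain ⟨Z, q, r, hD⟩ := distinguished_cocone_triangle (Sigma.desc fun i => α i ≫ c.inj i)
  have hcone : ∀ i, ∃ k : B i ⟶ Z, β i ≫ k = c.inj i ≫ q := fun i => by
    obtain ⟨k, hk, -⟩ := complete_distinguished_triangle_morphism _ _ (hT i) hD
      (Sigma.ι A i) (c.inj i)
      (Sigma.ι_desc (fun i => α i ≫ c.inj i) i).symm
    exact ⟨k, hk⟩
  choose k hk using hcone
  have hq : Cofan.IsColimit.desc hc (fun i => β i ≫ Sigma.ι B i) ≫ Sigma.desc k = q :=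
    Cofan.IsColimit.hom_ext hc _ _ fun i => by simp [hk]
  obtain ⟨v, hv⟩ := Triangle.coyoneda_exact₂ _ hD u (by
    change u ≫ q = 0
    rw [← hq, reassoc_of% hu, zero_comp])
  exact ⟨v, hv.symm⟩

theorem isCompactIn_univ_of_isCompactIn_rbHull [HasCoproducts.{v} C] {Q V : Set C}
    (hV : IsTStructureOn Set.univ (Susp Q) V)
    (hcoprod : ∀ (ι : Type v) (f : ι → C) (c : Cofan f), IsColimit c →
      (∀ i, f i ∈ rightOrth (Susp Q)) → c.pt ∈ rightOrth (Susp Q))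
    {P : C} (hP : P ∈ rbHull Q) (hPc : IsCompactIn (rbHull Q) P) : IsCompactIn Set.univ P := by
  intro ι f c hc
  refine ⟨hc.sumToHom_injective P, fun u => ?_⟩
  obtain ⟨n, hPn⟩ := hP
  obtain ⟨hcol⟩ := hc.nonempty_isColimit trivial
  choose A B α β γ hT hA hB using fun i => hV.exists_distTriang_shift_mem (f i) n
  have hu : u ≫ Cofan.IsColimit.desc hcol (fun i => β i ≫ Sigma.ι B i) = 0 := by
    have hB' : (∐ B)⟦n⟧ ∈ rightOrth (Susp Q) :=
      shift_sigma_mem hcoprod B n fun i _ hY g => hV.hom_zero hY (hB i) g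
    apply (shiftFunctor C n).map_injective
    rw [Functor.map_zero]
    exact hB' _ hPn _
  obtain ⟨v, hv⟩ := exists_lift_sigma_of_comp_eq_zero hcol α β γ hT u hu
  have hAc : IsCoprodIn (rbHull Q) A (Cofan.mk (∐ A) (Sigma.ι A)) :=
    isCoprodIn_of_isColimit (coproductIsCoproduct A) (sigma_mem_rbHull A n hA)
      fun i => ⟨n, hA i⟩
  obtain ⟨x, hx⟩ := (hPc ι A _ hAc).2 v
  refine ⟨DirectSum.map (fun i => Preadditive.rightComp P (α i)) x, ?_⟩
  rw [← sumToHom_comp (cA := Cofan.mk (∐ A) (Sigma.ι A)) α _ (fun i => Sigma.ι_desc _ i), hx, hv]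

theorem isCompactIn_rbHull_of_isCompactIn_univ [HasCoproducts.{v} C] {Q V : Set C}
    (hV : IsTStructureOn Set.univ (Susp Q) V) {P : C} (hPc : IsCompactIn Set.univ P) :
    IsCompactIn (rbHull Q) P := by
  intro ι f c hc
  obtain ⟨N, hN⟩ := hc.1
  have hf : ∀ i, (f i)⟦N⟧ ∈ Susp Q := fun i =>
    hV.mem_of_retract ((hc.nonempty_retract i).some.map (shiftFunctor C N)) hN
  obtain ⟨hcol⟩ := hc.nonempty_isColimit (sigma_mem_rbHull f N hf)
  exact hPc ι f c (isCoprodIn_of_isColimit hcol trivial fun _ => trivial)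

/-- **Compactness in the right bounded hull.**
Let `C` be a triangulated category with small coproducts and `Q` a set of objects such that
`Susp Q` is an aisle in `C` whose coaisle `Susp(Q)^⊥` is closed under small coproducts.
Let `D' := ⋃_{n∈ℤ} aisle(Q)[n]`.  Then an object `P` of `D'` is compact in `D'` if and only
if it is compact in `C`. -/
theorem stmt6 [HasCoproducts.{v} C] (Q : Set C)
    (haisle : ∃ V, IsTStructureOn Set.univ (Susp Q) V)
    (hcoprod : ∀ (ι : Type v) (f : ι → C) (c : Cofan f), IsColimit c →
      (∀ i, f i ∈ rightOrth (Susp Q)) → c.pt ∈ rightOrth (Susp Q)) :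
    ∀ P ∈ rbHull Q, (IsCompactIn (rbHull Q) P ↔ IsCompactIn Set.univ P) := by
  obtain ⟨V, hV⟩ := haisle
  exact fun P hP => ⟨isCompactIn_univ_of_isCompactIn_rbHull hV hcoprod hP,
    isCompactIn_rbHull_of_isCompactIn_univ hV⟩
end
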